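/- arXiv:2602.15728 — 4 statements merged into one kernel-verified Lean document; each statement's English description precedes it below -/
import Mathlib

section
/- Let V be a real inner product space and let A : ℝⁿ × ℝⁿ → V be a symmetric bilinear map such that |A(u,u)| ≤ c·|u|² for all u ∈ ℝⁿ. Then for any orthonormal vectors e_i, e_j, one has |A(e_i,e_i) + A(e_j,e_j)|² + 4|A(e_i,e_j)|² ≤ 4c². -/
/-- If `A` is a symmetric bilinear map on `ℝⁿ` with values in a real inner product
space satisfying `‖A(u,u)‖ ≤ c‖u‖²`, then for orthonormal `eᵢ, eⱼ` one has
`‖A(eᵢ,eᵢ) + A(eⱼ,eⱼ)‖² + 4‖A(eᵢ,eⱼ)‖² ≤ 4c²`. -/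
theorem stmt_1 (n : ℕ) (V : Type*) [NormedAddCommGroup V] [InnerProductSpace ℝ V]
    (A : EuclideanSpace ℝ (Fin n) →ₗ[ℝ] EuclideanSpace ℝ (Fin n) →ₗ[ℝ] V)
    (hsymm : ∀ u v, A u v = A v u) (c : ℝ)
    (hc : ∀ u, ‖A u u‖ ≤ c * ‖u‖ ^ 2)
    (ei ej : EuclideanSpace ℝ (Fin n))
    (hei : ‖ei‖ = 1) (hej : ‖ej‖ = 1) (horth : (inner ℝ ei ej : ℝ) = 0) :
    ‖A ei ei + A ej ej‖ ^ 2 + 4 * ‖A ei ej‖ ^ 2 ≤ 4 * c ^ 2 := by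
  have hc0 : 0 ≤ c := le_trans (norm_nonneg _) (by simpa [hei] using hc ei)
  have hnp : ‖ei + ej‖ ^ 2 = 2 := by
    rw [norm_add_sq_real, horth, hei, hej]; ring
  have hnm : ‖ei - ej‖ ^ 2 = 2 := by
    rw [norm_sub_sq_real, horth, hei, hej]; ring
  have hp : ‖A (ei + ej) (ei + ej)‖ ≤ 2 * c := by
    calc ‖A (ei + ej) (ei + ej)‖ ≤ c * ‖ei + ej‖ ^ 2 := hc _
    _ = 2 * c := by rw [hnp]; ring
  have hm : ‖A (ei - ej) (ei - ej)‖ ≤ 2 * c := by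
    calc ‖A (ei - ej) (ei - ej)‖ ≤ c * ‖ei - ej‖ ^ 2 := hc _
    _ = 2 * c := by rw [hnm]; ring
  set S := A ei ei + A ej ej
  set T := (2 : ℝ) • A ei ej
  have hAp : A (ei + ej) (ei + ej) = S + T := by
    simp only [map_add, LinearMap.add_apply, S, T, hsymm ej ei]
    module
  have hAm : A (ei - ej) (ei - ej) = S - T := by
    simp only [map_sub, LinearMap.sub_apply, S, T, hsymm ej ei]
    module
  have hpar : ‖S + T‖ ^ 2 + ‖S - T‖ ^ 2 = 2 * ‖S‖ ^ 2 + 2 * ‖T‖ ^ 2 := by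
    have := parallelogram_law_with_norm ℝ S T
    nlinarith [this]
  have hTn : ‖T‖ ^ 2 = 4 * ‖A ei ej‖ ^ 2 := by
    rw [norm_smul]; simp; ring
  have h1 : ‖S + T‖ ^ 2 ≤ (2 * c) ^ 2 := by
    rw [← hAp]; exact pow_le_pow_left₀ (norm_nonneg _) hp 2
  have h2 : ‖S - T‖ ^ 2 ≤ (2 * c) ^ 2 := by
    rw [← hAm]; exact pow_le_pow_left₀ (norm_nonneg _) hm 2
  nlinarith [hpar, hTn]
end

section
/- Let V be a real inner product space and A : ℝⁿ × ℝⁿ → V a symmetric bilinear map with |A(u,u)| ≤ c·|u|² for all u. Fix orthonormal vectors e₁, e₂, e₃, e₄ and λ, μ ∈ [-1,1]. Define W = A(e₁,e₁) + μ²A(e₂,e₂), X = A(e₃,e₃) + λ²A(e₄,e₄), Y = A(e₁,e₃) - λμ A(e₂,e₄), and S = (1+λ²)W + (1+μ²)X. Then |S|² + 4(1+λ²)(1+μ²)|Y|² ≤ 4(1+λ²)²(1+μ²)² c². -/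
set_option maxHeartbeats 1000000 in
/-- Second fundamental form estimate: with `W = A(e₁,e₁) + μ²A(e₂,e₂)`,
`X = A(e₃,e₃) + λ²A(e₄,e₄)`, `Y = A(e₁,e₃) - λμ A(e₂,e₄)`,
`S = (1+λ²)W + (1+μ²)X`, one has
`‖S‖² + 4(1+λ²)(1+μ²)‖Y‖² ≤ 4(1+λ²)²(1+μ²)²c²`. -/
theorem stmt_2 (n : ℕ) (V : Type*) [NormedAddCommGroup V] [InnerProductSpace ℝ V]
    (A : EuclideanSpace ℝ (Fin n) →ₗ[ℝ] EuclideanSpace ℝ (Fin n) →ₗ[ℝ] V)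
    (hsymm : ∀ u v, A u v = A v u) (c : ℝ)
    (hc : ∀ u, ‖A u u‖ ≤ c * ‖u‖ ^ 2)
    (e : Fin 4 → EuclideanSpace ℝ (Fin n)) (he : Orthonormal ℝ e)
    (l m : ℝ) (hl : l ∈ Set.Icc (-1 : ℝ) 1) (hm : m ∈ Set.Icc (-1 : ℝ) 1)
    (W X Y S : V)
    (hW : W = A (e 0) (e 0) + m ^ 2 • A (e 1) (e 1))
    (hX : X = A (e 2) (e 2) + l ^ 2 • A (e 3) (e 3))
    (hY : Y = A (e 0) (e 2) - (l * m) • A (e 1) (e 3))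
    (hS : S = (1 + l ^ 2) • W + (1 + m ^ 2) • X) :
    ‖S‖ ^ 2 + 4 * (1 + l ^ 2) * (1 + m ^ 2) * ‖Y‖ ^ 2
      ≤ 4 * (1 + l ^ 2) ^ 2 * (1 + m ^ 2) ^ 2 * c ^ 2 := by
  set a := Real.sqrt (1 + l ^ 2) with ha
  set b := Real.sqrt (1 + m ^ 2) with hb
  have ha2 : a ^ 2 = 1 + l ^ 2 := Real.sq_sqrt (by positivity)
  have hb2 : b ^ 2 = 1 + m ^ 2 := Real.sq_sqrt (by positivity)
  have hnorm : ∀ (x y : ℝ) (i j : Fin 4), i ≠ j →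
      ‖x • e i + y • e j‖ ^ 2 = x ^ 2 + y ^ 2 := by
    intro x y i j hij
    rw [@norm_add_sq_real, norm_smul, norm_smul, he.1, he.1,
      real_inner_smul_left, real_inner_smul_right, he.2 hij]
    simp [sq_abs]
  have hexp : ∀ (x y : ℝ) (i j : Fin 4),
      A (x • e i + y • e j) (x • e i + y • e j)
        = x ^ 2 • A (e i) (e i) + (2 * x * y) • A (e i) (e j)
          + y ^ 2 • A (e j) (e j) := by
    intro x y i j
    simp only [map_add, map_smul, LinearMap.add_apply, LinearMap.smul_apply]
    rw [hsymm (e j) (e i)]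
    module
  have hS' : S = a ^ 2 • W + b ^ 2 • X := by rw [hS, ha2, hb2]
  set z : V := (2 * (a * b)) • Y with hz
  have key₁ : A (a • e 0 + b • e 2) (a • e 0 + b • e 2)
      + A ((m * a) • e 1 + (-(l * b)) • e 3) ((m * a) • e 1 + (-(l * b)) • e 3)
      = S + z := by
    rw [hexp, hexp, hS', hW, hX, hz, hY]
    module
  have key₂ : A (a • e 0 + (-b) • e 2) (a • e 0 + (-b) • e 2)
      + A ((m * a) • e 1 + (l * b) • e 3) ((m * a) • e 1 + (l * b) • e 3)
      = S - z := by
    rw [hexp, hexp, hS', hW, hX, hz, hY]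
    module
  have hu₁ : ‖a • e 0 + b • e 2‖ ^ 2 = (1 + l ^ 2) + (1 + m ^ 2) := by
    rw [hnorm _ _ _ _ (by decide)]
    linear_combination ha2 + hb2
  have hu₂ : ‖a • e 0 + (-b) • e 2‖ ^ 2 = (1 + l ^ 2) + (1 + m ^ 2) := by
    rw [hnorm _ _ _ _ (by decide)]
    linear_combination ha2 + hb2
  have hv₁ : ‖(m * a) • e 1 + (-(l * b)) • e 3‖ ^ 2
      = m ^ 2 * (1 + l ^ 2) + l ^ 2 * (1 + m ^ 2) := by
    rw [hnorm _ _ _ _ (by decide)]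
    linear_combination m ^ 2 * ha2 + l ^ 2 * hb2
  have hv₂ : ‖(m * a) • e 1 + (l * b) • e 3‖ ^ 2
      = m ^ 2 * (1 + l ^ 2) + l ^ 2 * (1 + m ^ 2) := by
    rw [hnorm _ _ _ _ (by decide)]
    linear_combination m ^ 2 * ha2 + l ^ 2 * hb2
  have est₁ : ‖S + z‖ ≤ 2 * c * ((1 + l ^ 2) * (1 + m ^ 2)) := by
    calc ‖S + z‖ = ‖A (a • e 0 + b • e 2) (a • e 0 + b • e 2)
        + A ((m * a) • e 1 + (-(l * b)) • e 3)
          ((m * a) • e 1 + (-(l * b)) • e 3)‖ := by rw [key₁]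
      _ ≤ _ + _ := norm_add_le _ _
      _ ≤ c * ‖a • e 0 + b • e 2‖ ^ 2
          + c * ‖(m * a) • e 1 + (-(l * b)) • e 3‖ ^ 2 :=
        add_le_add (hc _) (hc _)
      _ = 2 * c * ((1 + l ^ 2) * (1 + m ^ 2)) := by rw [hu₁, hv₁]; ring
  have est₂ : ‖S - z‖ ≤ 2 * c * ((1 + l ^ 2) * (1 + m ^ 2)) := by
    calc ‖S - z‖ = ‖A (a • e 0 + (-b) • e 2) (a • e 0 + (-b) • e 2)
        + A ((m * a) • e 1 + (l * b) • e 3)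
          ((m * a) • e 1 + (l * b) • e 3)‖ := by rw [key₂]
      _ ≤ _ + _ := norm_add_le _ _
      _ ≤ c * ‖a • e 0 + (-b) • e 2‖ ^ 2
          + c * ‖(m * a) • e 1 + (l * b) • e 3‖ ^ 2 :=
        add_le_add (hc _) (hc _)
      _ = 2 * c * ((1 + l ^ 2) * (1 + m ^ 2)) := by rw [hu₂, hv₂]; ring
  have hsq₁ : ‖S + z‖ ^ 2 ≤ (2 * c * ((1 + l ^ 2) * (1 + m ^ 2))) ^ 2 :=
    pow_le_pow_left₀ (norm_nonneg _) est₁ 2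
  have hsq₂ : ‖S - z‖ ^ 2 ≤ (2 * c * ((1 + l ^ 2) * (1 + m ^ 2))) ^ 2 :=
    pow_le_pow_left₀ (norm_nonneg _) est₂ 2
  have hpar := parallelogram_law_with_norm ℝ S z
  have hz2 : ‖z‖ ^ 2 = 4 * ((1 + l ^ 2) * (1 + m ^ 2)) * ‖Y‖ ^ 2 := by
    rw [hz, norm_smul, Real.norm_eq_abs, mul_pow, sq_abs]
    linear_combination 4 * ‖Y‖ ^ 2 * b ^ 2 * ha2
      + 4 * ‖Y‖ ^ 2 * (1 + l ^ 2) * hb2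
  nlinarith [hpar, hsq₁, hsq₂, hz2, sq_nonneg (‖S‖), sq_nonneg (‖z‖)]
end

section
/- Let V be a real inner product space and A : ℝⁿ × ℝⁿ → V a symmetric bilinear map with |A(u,u)| ≤ c·|u|² for all u. Fix orthonormal e₁,…,e₄ and λ, μ ∈ [-1,1]. Define W = A(e₁,e₁) + μ²A(e₂,e₂), X = A(e₃,e₃) + λ²A(e₄,e₄), Z = λA(e₁,e₄) + μA(e₂,e₃), S = (1+λ²)W + (1+μ²)X. Then |S|² + 4(1+λ²)(1+μ²)|Z|² ≤ 4(1+λ²)²(1+μ²)² c². -/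
/-- Second fundamental form estimate: with `W = A(e₁,e₁) + μ²A(e₂,e₂)`,
`X = A(e₃,e₃) + λ²A(e₄,e₄)`, `Z = λA(e₁,e₄) + μA(e₂,e₃)`,
`S = (1+λ²)W + (1+μ²)X`, one has
`‖S‖² + 4(1+λ²)(1+μ²)‖Z‖² ≤ 4(1+λ²)²(1+μ²)²c²`. -/
theorem stmt_3 (n : ℕ) (V : Type*) [NormedAddCommGroup V] [InnerProductSpace ℝ V]
    (A : EuclideanSpace ℝ (Fin n) →ₗ[ℝ] EuclideanSpace ℝ (Fin n) →ₗ[ℝ] V)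
    (hsymm : ∀ u v, A u v = A v u) (c : ℝ)
    (hc : ∀ u, ‖A u u‖ ≤ c * ‖u‖ ^ 2)
    (e : Fin 4 → EuclideanSpace ℝ (Fin n)) (he : Orthonormal ℝ e)
    (l m : ℝ) (hl : l ∈ Set.Icc (-1 : ℝ) 1) (hm : m ∈ Set.Icc (-1 : ℝ) 1)
    (W X Z S : V)
    (hW : W = A (e 0) (e 0) + m ^ 2 • A (e 1) (e 1))
    (hX : X = A (e 2) (e 2) + l ^ 2 • A (e 3) (e 3))
    (hZ : Z = l • A (e 0) (e 3) + m • A (e 1) (e 2))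
    (hS : S = (1 + l ^ 2) • W + (1 + m ^ 2) • X) :
    ‖S‖ ^ 2 + 4 * (1 + l ^ 2) * (1 + m ^ 2) * ‖Z‖ ^ 2
      ≤ 4 * (1 + l ^ 2) ^ 2 * (1 + m ^ 2) ^ 2 * c ^ 2 := by
  have ha0 : (0:ℝ) < 1 + l ^ 2 := by positivity
  have hb0 : (0:ℝ) < 1 + m ^ 2 := by positivity
  set ra := Real.sqrt (1 + l ^ 2) with hra_def
  set rb := Real.sqrt (1 + m ^ 2) with hrb_def
  have hra : ra ^ 2 = 1 + l ^ 2 := Real.sq_sqrt ha0.le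
  have hrb : rb ^ 2 = 1 + m ^ 2 := Real.sq_sqrt hb0.le
  have hra0 : 0 ≤ ra := Real.sqrt_nonneg _
  have hrb0 : 0 ≤ rb := Real.sqrt_nonneg _
  have hc0 : 0 ≤ c := by
    have h1 : ‖A (e 0) (e 0)‖ ≤ c := by simpa [he.1 0] using hc (e 0)
    exact le_trans (norm_nonneg _) h1
  -- orthogonality
  have h03 : inner ℝ (e 0) (e 3) = (0:ℝ) := he.2 (by decide)
  have h12 : inner ℝ (e 1) (e 2) = (0:ℝ) := he.2 (by decide)
  -- norm computation helper
  have key : ∀ (i j : Fin 4), inner ℝ (e i) (e j) = (0:ℝ) → ∀ s t : ℝ,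
      ‖s • e i + t • e j‖ ^ 2 = s ^ 2 + t ^ 2 := by
    intro i j hij s t
    rw [norm_add_sq_real, norm_smul, norm_smul, real_inner_smul_left,
      real_inner_smul_right, hij, he.1 i, he.1 j]
    simp [Real.norm_eq_abs, mul_pow, sq_abs]
  set uP := ra • e 0 + (l * rb) • e 3 with huP
  set uM := ra • e 0 + (-(l * rb)) • e 3 with huM
  set vP := (m * ra) • e 1 + rb • e 2 with hvP
  set vM := (m * ra) • e 1 + (-rb) • e 2 with hvM
  have hnuP := key 0 3 h03 ra (l * rb)
  have hnuM := key 0 3 h03 ra (-(l * rb))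
  have hnvP := key 1 2 h12 (m * ra) rb
  have hnvM := key 1 2 h12 (m * ra) (-rb)
  set t := 2 * (ra * rb) with ht
  have hP : A uP uP + A vP vP = S + t • Z := by
    rw [hS, hW, hX, hZ, huP, hvP]
    simp only [map_add, map_smul, LinearMap.add_apply, LinearMap.smul_apply]
    rw [hsymm (e 3) (e 0), hsymm (e 2) (e 1), ← hra, ← hrb]
    module
  have hQ : A uM uM + A vM vM = S - t • Z := by
    rw [hS, hW, hX, hZ, huM, hvM]
    simp only [map_add, map_smul, LinearMap.add_apply, LinearMap.smul_apply]
    rw [hsymm (e 3) (e 0), hsymm (e 2) (e 1), ← hra, ← hrb]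
    module
  have hKP : ‖S + t • Z‖ ≤ 2 * (1 + l ^ 2) * (1 + m ^ 2) * c := by
    rw [← hP]
    calc ‖A uP uP + A vP vP‖ ≤ ‖A uP uP‖ + ‖A vP vP‖ := norm_add_le _ _
    _ ≤ c * ‖uP‖ ^ 2 + c * ‖vP‖ ^ 2 := add_le_add (hc _) (hc _)
    _ = 2 * (1 + l ^ 2) * (1 + m ^ 2) * c := by
        rw [huP, hvP, hnuP, hnvP]
        linear_combination (c * (1 + m ^ 2)) * hra + (c * (1 + l ^ 2)) * hrb
  have hKQ : ‖S - t • Z‖ ≤ 2 * (1 + l ^ 2) * (1 + m ^ 2) * c := by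
    rw [← hQ]
    calc ‖A uM uM + A vM vM‖ ≤ ‖A uM uM‖ + ‖A vM vM‖ := norm_add_le _ _
    _ ≤ c * ‖uM‖ ^ 2 + c * ‖vM‖ ^ 2 := add_le_add (hc _) (hc _)
    _ = 2 * (1 + l ^ 2) * (1 + m ^ 2) * c := by
        rw [huM, hvM, hnuM, hnvM]
        linear_combination (c * (1 + m ^ 2)) * hra + (c * (1 + l ^ 2)) * hrb
  have hP2 : ‖S + t • Z‖ ^ 2 ≤ (2 * (1 + l ^ 2) * (1 + m ^ 2) * c) ^ 2 :=
    pow_le_pow_left₀ (norm_nonneg _) hKP 2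
  have hQ2 : ‖S - t • Z‖ ^ 2 ≤ (2 * (1 + l ^ 2) * (1 + m ^ 2) * c) ^ 2 :=
    pow_le_pow_left₀ (norm_nonneg _) hKQ 2
  have hpar : ‖S + t • Z‖ ^ 2 + ‖S - t • Z‖ ^ 2 = 2 * (‖S‖ ^ 2 + ‖t • Z‖ ^ 2) := by
    rw [norm_add_sq_real, norm_sub_sq_real]; ring
  have ht2 : t ^ 2 = 4 * (1 + l ^ 2) * (1 + m ^ 2) := by
    rw [ht]
    linear_combination (4 * rb ^ 2) * hra + (4 * (1 + l ^ 2)) * hrb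
  have htZ2 : ‖t • Z‖ ^ 2 = 4 * (1 + l ^ 2) * (1 + m ^ 2) * ‖Z‖ ^ 2 := by
    rw [norm_smul, Real.norm_eq_abs, mul_pow, sq_abs, ht2]
  have hK2 : (2 * (1 + l ^ 2) * (1 + m ^ 2) * c) ^ 2
      = 4 * (1 + l ^ 2) ^ 2 * (1 + m ^ 2) ^ 2 * c ^ 2 := by ring
  linarith
end

section
/- Let γ : [0,L] → ℝ^N be a C² unit-speed curve with γ(0) = 0 and |γ''(t)| ≤ c for all t, where 0 < c < 2. If L ≥ π/c, then sup_t |γ(t)| ≥ 2/c > 1. In particular, a complete unit-speed curve starting at the origin with curvature bounded by c < 2 cannot remain in the closed unit ball for all time. -/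
open Real Set

/-- Barrier lemma: a function with `u t₀ = 1` and `|u'| ≤ c √(1-u²)` stays above
the comparison cosine `cos ((c+ε)(t-t₀)+ε)` on `[t₀, b]`. -/
lemma barrier_cos (c ε t₀ b : ℝ) (hc : 0 < c) (hε : 0 < ε)
    (hπ : (c + ε) * (b - t₀) + ε < Real.pi)
    (u u' : ℝ → ℝ) (hu : ∀ t, HasDerivAt u (u' t) t)
    (hbd : ∀ t, |u' t| ≤ c * Real.sqrt (1 - (u t) ^ 2))
    (h1 : u t₀ = 1) :
    ∀ t ∈ Icc t₀ b, Real.cos ((c + ε) * (t - t₀) + ε) ≤ u t := by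
  intro t ht
  have key : ∀ ⦃x : ℝ⦄, x ∈ Icc t₀ b → (fun s => -u s) x ≤ (fun s => -Real.cos ((c+ε)*(s-t₀)+ε)) x := by
    apply image_le_of_deriv_right_lt_deriv_boundary (a := t₀) (b := b)
      (f := fun s => -u s) (f' := fun s => -u' s) (B := fun s => -Real.cos ((c+ε)*(s-t₀)+ε))
      (B' := fun s => (c+ε) * Real.sin ((c+ε)*(s-t₀)+ε))
    · exact (continuousOn_of_forall_continuousAt (fun s _ => (hu s).continuousAt)).neg
    · intro x _
      exact ((hu x).neg).hasDerivWithinAt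
    · simp only [h1, sub_self, mul_zero, zero_add]
      linarith [Real.cos_le_one ε]
    · intro x
      have hθ : HasDerivAt (fun s => (c+ε)*(s-t₀)+ε) (c+ε) x := by
        simpa using (((hasDerivAt_id x).sub_const t₀).const_mul (c+ε)).add_const ε
      have := (Real.hasDerivAt_cos ((c+ε)*(x-t₀)+ε)).comp x hθ
      simpa [mul_comm, Function.comp_def, Pi.neg_def] using this.neg
    · intro x hx heq
      have hxθ : (c+ε)*(x-t₀)+ε < Real.pi := by
        have : (c+ε)*(x-t₀) ≤ (c+ε)*(b-t₀) := by
          have := hx.2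
          nlinarith [hx.1, hε, hc]
        linarith
      have hθ0 : 0 < (c+ε)*(x-t₀)+ε := by nlinarith [hx.1, hε, hc]
      have hsin : 0 < Real.sin ((c+ε)*(x-t₀)+ε) := Real.sin_pos_of_pos_of_lt_pi hθ0 hxθ
      have hux : u x = Real.cos ((c+ε)*(x-t₀)+ε) := by
        have := heq
        simp only [neg_inj] at this
        linarith [this]
      have hsq : Real.sqrt (1 - (u x)^2) = Real.sin ((c+ε)*(x-t₀)+ε) := by
        rw [hux]
        rw [show (1 : ℝ) - Real.cos ((c+ε)*(x-t₀)+ε) ^ 2 = Real.sin ((c+ε)*(x-t₀)+ε) ^ 2 by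
          have := Real.sin_sq_add_cos_sq ((c+ε)*(x-t₀)+ε); linarith]
        exact Real.sqrt_sq hsin.le
      have hb1 := hbd x
      rw [hsq] at hb1
      have : -u' x ≤ c * Real.sin ((c+ε)*(x-t₀)+ε) := by
        have := abs_le.mp hb1
        linarith [this.1]
      have hlt : c * Real.sin ((c+ε)*(x-t₀)+ε) < (c+ε) * Real.sin ((c+ε)*(x-t₀)+ε) := by
        apply mul_lt_mul_of_pos_right _ hsin
        linarith
      exact lt_of_le_of_lt this hlt
  have := key ht
  simp only [neg_le_neg_iff] at this
  linarith [this]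

/-- Comparison lemma: `u t₀ = 1` and `|u'| ≤ c √(1-u²)` imply `u t ≥ cos (c (t - t₀))`
on `[t₀, b]` as long as `b - t₀ ≤ π/(2c)`. -/
lemma key_cos (c t₀ b : ℝ) (hc : 0 < c) (hb : b - t₀ ≤ Real.pi / (2 * c))
    (u u' : ℝ → ℝ) (hu : ∀ t, HasDerivAt u (u' t) t)
    (hbd : ∀ t, |u' t| ≤ c * Real.sqrt (1 - (u t) ^ 2))
    (h1 : u t₀ = 1) :
    ∀ t ∈ Icc t₀ b, Real.cos (c * (t - t₀)) ≤ u t := by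
  intro t ht
  set D : ℝ := Real.pi / (2 * c) + 1 with hD
  have hDpos : 0 < D := by
    have := Real.pi_pos
    have : 0 < Real.pi / (2 * c) := by positivity
    simp [hD]; positivity
  set ε₀ : ℝ := (Real.pi / 2) / D with hε₀def
  have hε₀ : 0 < ε₀ := by
    have := Real.pi_pos
    positivity
  have tend : Filter.Tendsto (fun ε : ℝ => Real.cos ((c + ε) * (t - t₀) + ε)) (nhdsWithin 0 (Ioi 0))
      (nhds (Real.cos (c * (t - t₀)))) := by
    have hcont : Continuous fun ε : ℝ => Real.cos ((c + ε) * (t - t₀) + ε) := by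
      continuity
    have h00 : Filter.Tendsto (fun ε : ℝ => Real.cos ((c + ε) * (t - t₀) + ε)) (nhds 0)
        (nhds (Real.cos (c * (t - t₀)))) := by
      simpa using hcont.tendsto 0
    exact h00.mono_left nhdsWithin_le_nhds
  refine le_of_tendsto tend ?_
  filter_upwards [Ioo_mem_nhdsGT_of_mem (Set.mem_Ico.mpr ⟨le_refl (0:ℝ), hε₀⟩)] with ε hε
  have hεpos : 0 < ε := hε.1
  have hπ : (c + ε) * (b - t₀) + ε < Real.pi := by
    have h1' : (c + ε) * (b - t₀) ≤ (c + ε) * (Real.pi / (2 * c)) :=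
      mul_le_mul_of_nonneg_left hb (by linarith)
    have h2' : ε * D < Real.pi / 2 := by
      have := hε.2
      calc ε * D < ε₀ * D := by
            apply mul_lt_mul_of_pos_right this hDpos
        _ = Real.pi / 2 := by
            rw [hε₀def, div_mul_cancel₀ _ (ne_of_gt hDpos)]
    have hexp : (c + ε) * (Real.pi / (2 * c)) = Real.pi / 2 + ε * (Real.pi / (2 * c)) := by
      field_simp
    have : ε * (Real.pi / (2 * c)) + ε ≤ ε * D := by
      simp [hD]; ring_nf; nlinarith [hεpos]
    nlinarith [h1']
  exact barrier_cos c ε t₀ b hc hεpos hπ u u' hu hbd h1 t ht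

local notation "⟪" x ", " y "⟫" => @inner ℝ _ _ x y


/-- Bow lemma application: a `C²` unit-speed curve starting at the origin with
curvature at most `c < 2` and length at least `π/c` reaches distance at least
`2/c > 1` from the origin; in particular it cannot stay in the closed unit ball. -/
theorem stmt_13 (N : ℕ) (c L : ℝ) (hc0 : 0 < c) (hc2 : c < 2) (hL : L ≥ Real.pi / c)
    (γ : ℝ → EuclideanSpace ℝ (Fin N))
    (hγ : ContDiff ℝ 2 γ)
    (hunit : ∀ t, ‖deriv γ t‖ = 1)
    (hcurv : ∀ t, ‖deriv (deriv γ) t‖ ≤ c)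
    (h0 : γ 0 = 0) :
    (∃ t ∈ Set.Icc (0 : ℝ) L, ‖γ t‖ ≥ 2 / c) ∧ 2 / c > 1 := by
  have hπ := Real.pi_pos
  set T : ℝ → EuclideanSpace ℝ (Fin N) := deriv γ with hTdef
  set T' : ℝ → EuclideanSpace ℝ (Fin N) := deriv T with hT'def
  have hγ' : ContDiff ℝ (1 + 1) γ := by
    rw [show ((1 : WithTop ℕ∞) + 1) = 2 from by norm_num]
    exact hγ
  have hT1 : ContDiff ℝ 1 T := (contDiff_succ_iff_deriv.mp hγ').2.2
  have hTd := contDiff_one_iff_deriv.mp hT1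
  have hd : ∀ t, HasDerivAt T (T' t) t := fun t => (hTd.1 t).hasDerivAt
  have hγd : ∀ t, HasDerivAt γ (T t) t := fun t =>
    ((hγ.differentiable (by norm_num)) t).hasDerivAt
  -- orthogonality of T and T'
  have orth : ∀ t, ⟪T' t, T t⟫ = 0 := by
    intro t
    have h1 : HasDerivAt (fun s => ⟪T s, T s⟫) (⟪T t, T' t⟫ + ⟪T' t, T t⟫) t :=
      (hd t).inner ℝ (hd t)
    have h2 : (fun s => ⟪T s, T s⟫) = fun _ => (1 : ℝ) := funext fun s => by
      rw [real_inner_self_eq_norm_sq, hunit s, one_pow]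
    rw [h2] at h1
    have h3 := h1.unique (hasDerivAt_const t 1)
    have h4 : ⟪T t, T' t⟫ = ⟪T' t, T t⟫ := real_inner_comm _ _
    linarith [h3, h4]
  set t₀ : ℝ := Real.pi / (2 * c) with ht₀def
  set b : ℝ := Real.pi / c with hbdef
  have hbt₀ : b - t₀ = Real.pi / (2 * c) := by
    rw [hbdef, ht₀def]; field_simp; ring
  set e : EuclideanSpace ℝ (Fin N) := T t₀ with hedef
  have he1 : ‖e‖ = 1 := hunit t₀
  set u : ℝ → ℝ := fun s => ⟪T s, e⟫ with hudef
  set u' : ℝ → ℝ := fun s => ⟪T' s, e⟫ with hu'def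
  have hue : ∀ s, HasDerivAt u (u' s) s := fun s => by
    have := (hd s).inner ℝ (hasDerivAt_const s e)
    simpa [hudef, hu'def] using this
  have habs : ∀ s, |u s| ≤ 1 := fun s => by
    have := abs_real_inner_le_norm (T s) e
    rwa [hunit s, he1, one_mul] at this
  have hbd : ∀ s, |u' s| ≤ c * Real.sqrt (1 - (u s) ^ 2) := by
    intro s
    set w : EuclideanSpace ℝ (Fin N) := e - (u s) • T s with hwdef
    have hTw : ⟪T' s, w⟫ = u' s := by
      simp [hwdef, inner_sub_right, inner_smul_right, orth s, hu'def]
    have hww : ⟪w, w⟫ = 1 - (u s) ^ 2 := by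
      have hTT : ⟪T s, T s⟫ = 1 := by
        rw [real_inner_self_eq_norm_sq, hunit s, one_pow]
      have hee : ⟪e, e⟫ = 1 := by
        rw [real_inner_self_eq_norm_sq, he1, one_pow]
      have heT : ⟪e, T s⟫ = u s := real_inner_comm _ _
      simp [hwdef, inner_sub_left, inner_sub_right, inner_smul_left, inner_smul_right,
        hTT, hee, heT]
      ring_nf
      simp [hudef]
      rw [← real_inner_self_eq_norm_sq]
      simp only [inner_sub_left, inner_sub_right, real_inner_smul_left, real_inner_smul_right, hTT, hee, real_inner_comm e (T s)]
      ring
    have hnw : ‖w‖ = Real.sqrt (1 - (u s) ^ 2) := by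
      rw [← hww, real_inner_self_eq_norm_sq, Real.sqrt_sq (norm_nonneg w)]
    calc |u' s| = |⟪T' s, w⟫| := by rw [hTw]
      _ ≤ ‖T' s‖ * ‖w‖ := abs_real_inner_le_norm _ _
      _ ≤ c * ‖w‖ := mul_le_mul_of_nonneg_right (hcurv s) (norm_nonneg w)
      _ = c * Real.sqrt (1 - (u s) ^ 2) := by rw [hnw]
  have h1 : u t₀ = 1 := by
    rw [hudef]
    simp only [hedef]
    rw [real_inner_self_eq_norm_sq, hunit t₀, one_pow]
  -- the angle estimate on both sides of t₀
  have right : ∀ t ∈ Set.Icc t₀ b, Real.cos (c * (t - t₀)) ≤ u t :=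
    key_cos c t₀ b hc0 (le_of_eq hbt₀) u u' hue hbd h1
  have left : ∀ t ∈ Set.Icc (0 : ℝ) t₀, Real.cos (c * (t - t₀)) ≤ u t := by
    intro t ht
    set v : ℝ → ℝ := fun s => u (2 * t₀ - s) with hvdef
    set v' : ℝ → ℝ := fun s => -u' (2 * t₀ - s) with hv'def
    have hv : ∀ s, HasDerivAt v (v' s) s := by
      intro s
      have h := (hue (2 * t₀ - s)).comp s ((hasDerivAt_const s (2 * t₀)).sub (hasDerivAt_id s))
      simpa [hvdef, hv'def, Function.comp_def] using h
    have hvbd : ∀ s, |v' s| ≤ c * Real.sqrt (1 - (v s) ^ 2) := fun s => by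
      simpa [hvdef, hv'def, abs_neg] using hbd (2 * t₀ - s)
    have hv1 : v t₀ = 1 := by
      simp only [hvdef]
      rw [show 2 * t₀ - t₀ = t₀ by ring, h1]
    have hkey := key_cos c t₀ (2 * t₀) hc0
      (by rw [show 2 * t₀ - t₀ = t₀ by ring]) v v' hv hvbd hv1
    have hs : (2 * t₀ - t) ∈ Set.Icc t₀ (2 * t₀) := by
      constructor <;> [linarith [ht.2]; linarith [ht.1]]
    have := hkey _ hs
    have hv2 : v (2 * t₀ - t) = u t := by
      simp only [hvdef]
      rw [show 2 * t₀ - (2 * t₀ - t) = t by ring]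
    rw [hv2] at this
    have hcoseq : Real.cos (c * (2 * t₀ - t - t₀)) = Real.cos (c * (t - t₀)) := by
      rw [show c * (2 * t₀ - t - t₀) = -(c * (t - t₀)) by ring, Real.cos_neg]
    rwa [hcoseq] at this
  have combined : ∀ t ∈ Set.Icc (0 : ℝ) b, Real.cos (c * (t - t₀)) ≤ u t := by
    intro t ht
    rcases le_total t t₀ with h | h
    · exact left t ⟨ht.1, h⟩
    · exact right t ⟨h, ht.2⟩
  have hb0 : (0 : ℝ) ≤ b := by positivity
  have hucont : Continuous u := (hTd.1.continuous).inner continuous_const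
  have hccont : Continuous fun t => Real.cos (c * (t - t₀)) := by fun_prop
  -- value of the comparison integral
  have hint2 : ∫ t in (0 : ℝ)..b, Real.cos (c * (t - t₀)) = 2 / c := by
    have hF : ∀ t ∈ Set.uIcc (0 : ℝ) b,
        HasDerivAt (fun s => (1 / c) * Real.sin (c * (s - t₀))) (Real.cos (c * (t - t₀))) t := by
      intro t _
      have h := ((Real.hasDerivAt_sin (c * (t - t₀))).comp t
        (((hasDerivAt_id t).sub_const t₀).const_mul c)).const_mul (1 / c)
      have heq : c⁻¹ * (Real.cos (c * (t - t₀)) * c) = Real.cos (c * (t - t₀)) := by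
        field_simp
      simpa [Function.comp, heq] using h
    rw [intervalIntegral.integral_eq_sub_of_hasDerivAt hF (hccont.intervalIntegrable 0 b)]
    have e1 : c * (b - t₀) = Real.pi / 2 := by
      rw [hbt₀]; field_simp
    have e2 : c * ((0 : ℝ) - t₀) = -(Real.pi / 2) := by
      rw [ht₀def]; field_simp; ring
    rw [e1, e2, Real.sin_pi_div_two, Real.sin_neg, Real.sin_pi_div_two]
    field_simp
    ring
  have hint1 : ∫ t in (0 : ℝ)..b, u t = ⟪γ b, e⟫ := by
    have hG : ∀ t ∈ Set.uIcc (0 : ℝ) b, HasDerivAt (fun s => ⟪γ s, e⟫) (u t) t := by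
      intro t _
      have := (hγd t).inner ℝ (hasDerivAt_const t e)
      simpa [hudef] using this
    rw [intervalIntegral.integral_eq_sub_of_hasDerivAt hG (hucont.intervalIntegrable 0 b)]
    simp [h0]
  have hmono : (2 : ℝ) / c ≤ ⟪γ b, e⟫ := by
    rw [← hint1, ← hint2]
    exact intervalIntegral.integral_mono_on hb0 (hccont.intervalIntegrable 0 b)
      (hucont.intervalIntegrable 0 b) combined
  have hfin : 2 / c ≤ ‖γ b‖ := by
    have := real_inner_le_norm (γ b) e
    rw [he1, mul_one] at this
    linarith
  refine ⟨⟨b, ⟨hb0, hL⟩, hfin⟩, ?_⟩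
  rw [gt_iff_lt]
  exact (one_lt_div hc0).mpr hc2
end
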